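/- Let A₁, ..., A_r be finite abelian groups, and for each i write A_i = ∏_{j=1}^{l_i} C_{i,j} as a product of cyclic invariant factors with |C_{i,j}| dividing |C_{i,j+1}|. Then the descending iterated standard wreath product of the cyclic groups C_{i,j} taken in lexicographic order (C_{1,1}, C_{1,2}, ..., C_{1,l₁}, C_{2,1}, ..., C_{r,l_r}) admits a surjective homomorphism onto A₁ ≀ (A₂ ≀ (··· ≀ A_r)···). -/

import Mathlib

/-- The automorphism action of `G` on `G → H` by right translation:
`(wrAut H G g) f x = f (x * g)`, so that the semidirect product below has
multiplication `(f₁, g₁)(f₂, g₂) = (f₁ · f₂^{g₁⁻¹}, g₁g₂)` with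
`f₂^{g₁⁻¹}(x) = f₂ (x * g₁)`. -/
def wrAut (H G : Type*) [Group H] [Group G] : G →* MulAut (G → H) where
  toFun g :=
    { toFun := fun f x => f (x * g)
      invFun := fun f x => f (x * g⁻¹)
      left_inv := fun f => funext fun x => by simp [mul_assoc]
      right_inv := fun f => funext fun x => by simp [mul_assoc]
      map_mul' := fun f₁ f₂ => rfl }
  map_one' := MulEquiv.ext fun f => funext fun x => by simp
  map_mul' := fun g₁ g₂ => MulEquiv.ext fun f => funext fun x => by simp [mul_assoc]

/-- The standard (regular) wreath product `H ≀ G`. -/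
abbrev Wr (H G : Type*) [Group H] [Group G] := SemidirectProduct (G → H) G (wrAut H G)

/-- The standard wreath product of bundled groups. -/
def WrGrp (H G : GrpCat.{u}) : GrpCat.{u} := GrpCat.of (Wr H G)

/-- Descending iterated standard wreath product `C₁ ≀ (C₂ ≀ (⋯ ≀ C_r)⋯)`,
given by a head group and the list of remaining groups. -/
def descW : GrpCat.{u} → List GrpCat.{u} → GrpCat.{u}
  | G, [] => G
  | G, H :: t => WrGrp G (descW H t)

/-- Ascending iterated standard wreath product `(⋯(C₁ ≀ C₂) ≀ ⋯) ≀ C_r`,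
given by a head group and the list of remaining groups. -/
def ascW : GrpCat.{u} → List GrpCat.{u} → GrpCat.{u}
  | G, [] => G
  | G, H :: t => ascW (WrGrp G H) t

/-- The direct product of a list of bundled groups. -/
def listProd : List GrpCat.{u} → GrpCat.{u}
  | [] => GrpCat.of PUnit
  | G :: t => GrpCat.of (G × listProd t)

/-!
Two kinds of epimorphisms between wreath products with abelian base `C` do all the work.
Multiplying the values of `f : G₁ → C` over the fibres of an epimorphism `G₁ ↠ G₂` of a finite
group gives `C ≀ G₁ ↠ C ≀ G₂`. Applied to `A ≀ G ↠ G` and paired with the projection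
`C ≀ (A ≀ G) ↠ A ≀ G`, it gives `C ≀ (A ≀ G) ↠ (C × A) ≀ G`, which merges two adjacent factors
of one block. Iterating this merges the invariant factors `C_{i,1}, …, C_{i,l_i}` into `A_i`
(for the last block, `C ≀ D ↠ C × D` by taking the total product), and the first kind of map
lets each merge take place inside the acting group of the outer wreath factors.
-/

open Function
open scoped IsMulCommutative

universe u

section FiberwiseProd

variable {H G₁ G₂ : Type*} [CommMonoid H] [Fintype G₁] [DecidableEq G₂]

def fiberwiseProd (φ : G₁ → G₂) : (G₁ → H) →* (G₂ → H) where
  toFun f y := ∏ x with φ x = y, f x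
  map_one' := by ext; simp
  map_mul' f g := by ext; simp [Finset.prod_mul_distrib]

@[simp]
theorem fiberwiseProd_apply (φ : G₁ → G₂) (f : G₁ → H) (y : G₂) :
    fiberwiseProd φ f y = ∏ x with φ x = y, f x :=
  rfl

theorem fiberwiseProd_surjective {φ : G₁ → G₂} (hφ : Surjective φ) :
    Surjective (fiberwiseProd (H := H) φ) := by
  classical
  intro f
  refine ⟨fun x => if x = surjInv hφ (φ x) then f (φ x) else 1, funext fun y => ?_⟩
  rw [fiberwiseProd_apply,
    Finset.prod_eq_single_of_mem (surjInv hφ y) (by simp [surjInv_eq hφ y])]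
  · simp [surjInv_eq hφ y]
  · rintro x hx hne
    rw [(Finset.mem_filter.mp hx).2, if_neg hne]

theorem fiberwiseProd_comp_mulRight [Group G₁] [Group G₂] (φ : G₁ →* G₂) (f : G₁ → H)
    (g : G₁) (y : G₂) :
    fiberwiseProd φ (fun x => f (x * g)) y = fiberwiseProd φ f (y * φ g) := by
  simp only [fiberwiseProd_apply]
  exact Finset.prod_equiv (Equiv.mulRight g) (by simp) (by simp)

end FiberwiseProd

theorem SemidirectProduct.map_surjective {N₁ G₁ N₂ G₂ : Type*} [Group N₁] [Group G₁] [Group N₂]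
    [Group G₂] {φ₁ : G₁ →* MulAut N₁} {φ₂ : G₂ →* MulAut N₂} {fn : N₁ →* N₂} {fg : G₁ →* G₂}
    {h : ∀ g : G₁, fn.comp (φ₁ g).toMonoidHom = (φ₂ (fg g)).toMonoidHom.comp fn}
    (hn : Surjective fn) (hg : Surjective fg) : Surjective (map fn fg h) := by
  rintro ⟨n, g⟩
  obtain ⟨n, rfl⟩ := hn n
  obtain ⟨g, rfl⟩ := hg g
  exact ⟨⟨n, g⟩, rfl⟩

namespace Wr

instance {H G : Type*} [Group H] [Group G] [Finite H] [Finite G] : Finite (Wr H G) :=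
  Finite.of_equiv _ SemidirectProduct.equivProd.symm

def mapLeft {H₁ H₂ : Type*} (G : Type*) [Group H₁] [Group H₂] [Group G] (φ : H₁ →* H₂) :
    Wr H₁ G →* Wr H₂ G :=
  SemidirectProduct.map (φ.compLeft G) (MonoidHom.id G) fun _ => rfl

theorem mapLeft_surjective {H₁ H₂ : Type*} (G : Type*) [Group H₁] [Group H₂] [Group G]
    {φ : H₁ →* H₂} (hφ : Surjective φ) : Surjective (mapLeft G φ) :=
  SemidirectProduct.map_surjective hφ.comp_left surjective_id

section CommLeft

variable {C A G G₁ G₂ : Type*} [Group C] [IsMulCommutative C] [Group A] [Group G]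
  [Group G₁] [Group G₂]

def mapRight [Fintype G₁] [DecidableEq G₂] (φ : G₁ →* G₂) : Wr C G₁ →* Wr C G₂ :=
  SemidirectProduct.map (fiberwiseProd φ) φ fun g =>
    MonoidHom.ext fun f => funext fun y => fiberwiseProd_comp_mulRight φ f g y

theorem mapRight_surjective [Fintype G₁] [DecidableEq G₂] {φ : G₁ →* G₂} (hφ : Surjective φ) :
    Surjective (mapRight (C := C) φ) :=
  SemidirectProduct.map_surjective (fiberwiseProd_surjective hφ) hφ

theorem exists_mapRight_surjective [Finite G₁] {φ : G₁ →* G₂} (hφ : Surjective φ) :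
    ∃ π : Wr C G₁ →* Wr C G₂, Surjective π := by
  classical
  have := Fintype.ofFinite G₁
  exact ⟨mapRight φ, mapRight_surjective hφ⟩

def toProd [Fintype G] : Wr C G →* C × G where
  toFun w := (∏ x, w.left x, w.right)
  map_one' := by ext <;> simp
  map_mul' w₁ w₂ := by
    ext
    · change ∏ x, w₁.left x * w₂.left (x * w₁.right) = (∏ x, w₁.left x) * ∏ x, w₂.left x
      rw [Finset.prod_mul_distrib]
      exact congrArg _ (Equiv.prod_comp (Equiv.mulRight w₁.right) w₂.left)
    · rfl

theorem toProd_surjective [Fintype G] : Surjective (toProd (C := C) (G := G)) := by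
  classical
  rintro ⟨c, g⟩
  refine ⟨⟨Pi.mulSingle 1 c, g⟩, ?_⟩
  ext
  · simp [toProd]
  · rfl

def toProdWr [Fintype (Wr A G)] [DecidableEq G] : Wr C (Wr A G) →* Wr (C × A) G where
  toFun w := ⟨fun x => (fiberwiseProd SemidirectProduct.rightHom w.left x, w.right.left x),
    w.right.right⟩
  map_one' := by ext <;> simp
  map_mul' w₁ w₂ := by
    ext x
    · change fiberwiseProd _ (w₁.left * fun u => w₂.left (u * w₁.right)) x = _
      rw [map_mul, Pi.mul_apply, fiberwiseProd_comp_mulRight]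
      rfl
    · rfl
    · rfl

theorem toProdWr_surjective [Fintype (Wr A G)] [DecidableEq G] :
    Surjective (toProdWr (C := C) (A := A) (G := G)) := by
  rintro ⟨f, g⟩
  obtain ⟨c, hc⟩ := fiberwiseProd_surjective (H := C)
    (SemidirectProduct.rightHom_surjective (φ := wrAut A G)) fun x => (f x).1
  refine ⟨⟨c, ⟨fun x => (f x).2, g⟩⟩, ?_⟩
  ext x
  · exact congrFun hc x
  · rfl
  · rfl

theorem exists_toProdWr_surjective [Finite A] [Finite G] :
    ∃ π : Wr C (Wr A G) →* Wr (C × A) G, Surjective π := by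
  classical
  have := Fintype.ofFinite (Wr A G)
  exact ⟨toProdWr, toProdWr_surjective⟩

end CommLeft

end Wr

section Iterated

theorem finite_descW (C : GrpCat.{u}) (L : List GrpCat.{u}) (h : ∀ H ∈ C :: L, Finite H) :
    Finite (descW C L) := by
  induction L generalizing C with
  | nil => exact h C List.mem_cons_self
  | cons A L ih =>
    obtain ⟨hC, hL⟩ := List.forall_mem_cons.mp h
    have := ih A hL
    exact inferInstanceAs (Finite (Wr C (descW A L)))

theorem finite_listProd (L : List GrpCat.{u}) (h : ∀ H ∈ L, Finite H) : Finite (listProd L) := by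
  induction L with
  | nil => exact inferInstanceAs (Finite PUnit)
  | cons A L ih =>
    obtain ⟨hA, hL⟩ := List.forall_mem_cons.mp h
    have := ih hL
    exact inferInstanceAs (Finite (A × listProd L))

theorem isMulCommutative_listProd (L : List GrpCat.{u}) (h : ∀ H ∈ L, IsMulCommutative H) :
    IsMulCommutative (listProd L) := by
  induction L with
  | nil => exact inferInstanceAs (IsMulCommutative PUnit)
  | cons A L ih =>
    obtain ⟨hA, hL⟩ := List.forall_mem_cons.mp h
    have := ih hL
    exact inferInstanceAs (IsMulCommutative (A × listProd L))

theorem exists_surjective_descW_to_listProd (C : GrpCat.{u}) [IsMulCommutative C]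
    (L : List GrpCat.{u}) (hL : ∀ H ∈ L, Finite H ∧ IsMulCommutative H) :
    ∃ π : descW C L →* listProd (C :: L), Surjective π := by
  induction L generalizing C with
  | nil => exact ⟨(MonoidHom.id C).prod 1, fun c => ⟨c.1, rfl⟩⟩
  | cons A L ih =>
    obtain ⟨⟨hA, _⟩, hL⟩ := List.forall_mem_cons.mp hL
    obtain ⟨π, hπ⟩ := ih A hL
    have := finite_descW A L (List.forall_mem_cons.mpr ⟨hA, fun H hH => (hL H hH).1⟩)
    have := Fintype.ofFinite (descW A L)
    exact ⟨((MonoidHom.id C).prodMap π).comp Wr.toProd,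
      (surjective_id.prodMap hπ).comp Wr.toProd_surjective⟩

theorem exists_surjective_descW_append_to_wrGrp (C : GrpCat.{u}) [IsMulCommutative C]
    (L : List GrpCat.{u}) (B : GrpCat.{u}) (L₂ : List GrpCat.{u})
    (hL : ∀ H ∈ L, Finite H ∧ IsMulCommutative H) (hB : ∀ H ∈ B :: L₂, Finite H) :
    ∃ π : descW C (L ++ B :: L₂) →* WrGrp (listProd (C :: L)) (descW B L₂), Surjective π := by
  induction L generalizing C with
  | nil =>
    exact ⟨Wr.mapLeft _ ((MonoidHom.id C).prod 1), Wr.mapLeft_surjective _ fun c => ⟨c.1, rfl⟩⟩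
  | cons A L ih =>
    obtain ⟨⟨hA, _⟩, hL⟩ := List.forall_mem_cons.mp hL
    obtain ⟨π, hπ⟩ := ih A hL
    have := finite_descW A (L ++ B :: L₂) (by grind)
    have := finite_listProd (A :: L) (by grind)
    have := finite_descW B L₂ hB
    obtain ⟨π', hπ'⟩ := Wr.exists_mapRight_surjective (C := C) hπ
    obtain ⟨ρ, hρ⟩ := Wr.exists_toProdWr_surjective (C := C) (A := listProd (A :: L))
      (G := descW B L₂)
    exact ⟨ρ.comp π', hρ.comp hπ'⟩

theorem exists_surjective_descW_flatMap (P : GrpCat.{u} × List GrpCat.{u})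
    (M : List (GrpCat.{u} × List GrpCat.{u}))
    (h : ∀ H : GrpCat.{u}, H ∈ (P :: M).flatMap (fun Q => Q.1 :: Q.2) →
      Finite H ∧ IsMulCommutative H) :
    ∃ π : descW P.1 (P.2 ++ M.flatMap fun Q => Q.1 :: Q.2) →*
        descW (listProd (P.1 :: P.2)) (M.map fun Q => listProd (Q.1 :: Q.2)),
      Surjective π := by
  simp only [List.flatMap_cons, List.cons_append, List.forall_mem_cons, List.forall_mem_append]
    at h
  obtain ⟨⟨-, _⟩, hP, hM⟩ := h
  induction M generalizing P with
  | nil =>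
    rw [List.flatMap_nil, List.append_nil]
    exact exists_surjective_descW_to_listProd P.1 P.2 hP
  | cons Q M ih =>
    simp only [List.flatMap_cons, List.cons_append, List.forall_mem_cons, List.forall_mem_append]
      at hM
    obtain ⟨⟨hQ, hQcomm⟩, hQ₂, hM⟩ := hM
    obtain ⟨π, hπ⟩ := ih Q hQcomm hQ₂ hM
    obtain ⟨ρ, hρ⟩ := exists_surjective_descW_append_to_wrGrp P.1 P.2 Q.1
      (Q.2 ++ M.flatMap fun Q => Q.1 :: Q.2) hP (by grind)
    have := isMulCommutative_listProd (P.1 :: P.2) (by grind)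
    have := finite_descW Q.1 (Q.2 ++ M.flatMap fun Q => Q.1 :: Q.2) (by grind)
    obtain ⟨π', hπ'⟩ := Wr.exists_mapRight_surjective (C := listProd (P.1 :: P.2)) hπ
    exact ⟨π'.comp ρ, hπ'.comp hρ⟩

end Iterated

theorem stmt16_general (P : GrpCat.{u} × List GrpCat.{u}) (M : List (GrpCat.{u} × List GrpCat.{u}))
    (hcyc : ∀ Q ∈ P :: M, ∀ H ∈ Q.1 :: Q.2, Finite H ∧ IsCyclic H) :
    ∃ π : descW P.1 (P.2 ++ M.flatMap fun Q => Q.1 :: Q.2) →*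
        descW (listProd (P.1 :: P.2)) (M.map fun Q => listProd (Q.1 :: Q.2)),
      Function.Surjective π := by
  refine exists_surjective_descW_flatMap P M fun H hH => ?_
  obtain ⟨Q, hQ, hH⟩ := List.mem_flatMap.mp hH
  have := (hcyc Q hQ H hH).2
  exact ⟨(hcyc Q hQ H hH).1, inferInstance⟩

/-- Let `A₁, …, A_r` be finite abelian groups, each given by its
invariant factor decomposition `A_i = C_{i,1} × ⋯ × C_{i,l_i}` with
`|C_{i,j}| ∣ |C_{i,j+1}|` (each `A_i` is encoded as a pair `Q = (C_{i,1}, [C_{i,2}, …])`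
of a head cyclic group and the list of remaining invariant factors, and the family
as the head pair `P` and the list `M` of remaining pairs). Then the descending
iterated standard wreath product of all the `C_{i,j}` in lexicographic order maps
onto `A₁ ≀ (A₂ ≀ (⋯ ≀ A_r)⋯)`. -/
theorem stmt16 (P : GrpCat.{u} × List GrpCat.{u}) (M : List (GrpCat.{u} × List GrpCat.{u}))
    (hcyc : ∀ Q ∈ P :: M, ∀ H ∈ Q.1 :: Q.2, Finite H ∧ IsCyclic H)
    (hdvd : ∀ Q ∈ P :: M,
      List.Chain (fun H K : GrpCat.{u} => Nat.card H ∣ Nat.card K) Q.1 Q.2) :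
    ∃ π : descW P.1 (P.2 ++ M.flatMap fun Q => Q.1 :: Q.2) →*
        descW (listProd (P.1 :: P.2)) (M.map fun Q => listProd (Q.1 :: Q.2)),
      Function.Surjective π :=
  stmt16_general P M hcyc
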